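/- Let R ∈ ℝ^{d×d} satisfy R = U'V where U, V ∈ ℝ^{m×d} have orthonormal columns, and let sgn(R) denote its matrix sign function (the orthogonal factor in its polar decomposition). Then ‖R − sgn(R)‖_op ≤ ‖UU' − VV'‖_op²; i.e., the alignment matrix between two nearby orthonormal frames is close to an orthogonal matrix, with error quadratic in the subspace distance. -/

import Mathlib

/-!
With `R = Uᵀ V = A Σ Bᵀ`, we have `R - A Bᵀ = A (Σ - 1) Bᵀ`, whose operator norm is
`maxᵢ |σᵢ - 1|` by orthogonal invariance. Since `σᵢ ≥ 0`, this is at most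
`maxᵢ |1 - σᵢ²| = ‖1 - Rᵀ R‖`. Finally `1 - Rᵀ R = (P V)ᵀ (P V)` for `P = U Uᵀ - V Vᵀ`, because
`P V = U R - V`; hence `‖1 - Rᵀ R‖ = ‖P V‖² ≤ ‖P‖²`.
-/

open Matrix
open scoped Matrix.Norms.L2Operator

namespace Matrix

variable {m n : Type*} [Fintype m] [Fintype n] [DecidableEq n]

lemma l2_opNorm_le_one_of_transpose_mul_self_eq_one {V : Matrix m n ℝ} (hV : Vᵀ * V = 1) :
    ‖V‖ ≤ 1 := by
  have h : ‖V‖ * ‖V‖ ≤ 1 := by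
    rw [← l2_opNorm_conjTranspose_mul_self, conjTranspose_eq_transpose_of_trivial, hV,
      ← diagonal_one, l2_opNorm_diagonal]
    exact (pi_norm_le_iff_of_nonneg zero_le_one).mpr fun _ => by simp
  nlinarith [norm_nonneg V]

lemma l2_opNorm_mul_mul_transpose_of_orthogonal {A B : Matrix n n ℝ} (hA : Aᵀ * A = 1)
    (hB : Bᵀ * B = 1) (X : Matrix n n ℝ) : ‖A * X * Bᵀ‖ = ‖X‖ := by
  have hA' : A ∈ unitary (Matrix n n ℝ) := mem_unitaryGroup_iff'.mpr hA
  have hB' : Bᵀ ∈ unitary (Matrix n n ℝ) := mem_unitaryGroup_iff'.mpr <| by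
    rw [star_eq_conjTranspose, conjTranspose_eq_transpose_of_trivial, transpose_transpose]
    exact mul_eq_one_comm.mp hB
  rw [CStarRing.norm_mul_mem_unitary _ hB', CStarRing.norm_mem_unitary_mul _ hA']

lemma l2_opNorm_diagonal_sub_one_le {S : n → ℝ} (hS : ∀ i, 0 ≤ S i) :
    ‖diagonal S - 1‖ ≤ ‖1 - diagonal S * diagonal S‖ := by
  rw [← diagonal_one, diagonal_mul_diagonal, diagonal_sub, diagonal_sub,
    l2_opNorm_diagonal, l2_opNorm_diagonal]
  refine (pi_norm_le_iff_of_nonneg (norm_nonneg _)).mpr fun i => ?_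
  refine le_trans ?_ (norm_le_pi_norm _ i)
  have hfactor : 1 - S i * S i = (1 - S i) * (1 + S i) := by ring
  rw [Real.norm_eq_abs, Real.norm_eq_abs, abs_sub_comm, hfactor, abs_mul,
    abs_of_nonneg (by linarith [hS i] : 0 ≤ 1 + S i)]
  exact le_mul_of_one_le_right (abs_nonneg _) (by linarith [hS i])

lemma transpose_mul_self_sub_projection_mul {U V : Matrix m n ℝ} (hU : Uᵀ * U = 1)
    (hV : Vᵀ * V = 1) :
    ((U * Uᵀ - V * Vᵀ) * V)ᵀ * ((U * Uᵀ - V * Vᵀ) * V) = 1 - (Uᵀ * V)ᵀ * (Uᵀ * V) := by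
  set R := Uᵀ * V with hR
  have hPV : (U * Uᵀ - V * Vᵀ) * V = U * R - V := by
    rw [Matrix.sub_mul, Matrix.mul_assoc, Matrix.mul_assoc, hV, Matrix.mul_one]
  have hVU : Vᵀ * U = Rᵀ := by rw [hR, transpose_mul, transpose_transpose]
  rw [hPV, transpose_sub, transpose_mul, Matrix.sub_mul, Matrix.mul_sub, Matrix.mul_sub,
    Matrix.mul_assoc, ← Matrix.mul_assoc Uᵀ, hU, Matrix.one_mul, Matrix.mul_assoc, ← hR,
    ← Matrix.mul_assoc Vᵀ, hVU, hV]
  abel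

lemma l2_opNorm_one_sub_transpose_mul_self_le [DecidableEq m] {U V : Matrix m n ℝ}
    (hU : Uᵀ * U = 1) (hV : Vᵀ * V = 1) :
    ‖1 - (Uᵀ * V)ᵀ * (Uᵀ * V)‖ ≤ ‖U * Uᵀ - V * Vᵀ‖ ^ 2 := by
  rw [← transpose_mul_self_sub_projection_mul hU hV, ← conjTranspose_eq_transpose_of_trivial,
    l2_opNorm_conjTranspose_mul_self, ← sq]
  calc ‖(U * Uᵀ - V * Vᵀ) * V‖ ^ 2 ≤ (‖U * Uᵀ - V * Vᵀ‖ * ‖V‖) ^ 2 :=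
        pow_le_pow_left₀ (norm_nonneg _) (l2_opNorm_mul _ _) 2
    _ ≤ ‖U * Uᵀ - V * Vᵀ‖ ^ 2 := by
        gcongr
        exact mul_le_of_le_one_right (norm_nonneg _)
          (l2_opNorm_le_one_of_transpose_mul_self_eq_one hV)

end Matrix

/-- Lemma 2 of Abbe et al. (2020): for orthonormal frames `U, V ∈ ℝ^{m×d}` with
`R = U'V` having polar/singular decomposition `R = A·diag(S)·B'` (`A, B` orthogonal,
`S ≥ 0`), the matrix sign function `sgn(R) = A·B'` satisfies
`‖R − sgn(R)‖_op ≤ ‖UU' − VV'‖_op²`. -/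
theorem stmt_11 (m d : ℕ) (U V : Matrix (Fin m) (Fin d) ℝ)
    (hU : Uᵀ * U = 1) (hV : Vᵀ * V = 1)
    (R : Matrix (Fin d) (Fin d) ℝ) (hR : R = Uᵀ * V)
    (A B : Matrix (Fin d) (Fin d) ℝ) (S : Fin d → ℝ)
    (hA : Aᵀ * A = 1) (hB : Bᵀ * B = 1) (hS : ∀ i, 0 ≤ S i)
    (hpolar : R = A * Matrix.diagonal S * Bᵀ) :
    ‖R - A * Bᵀ‖ ≤ ‖U * Uᵀ - V * Vᵀ‖ ^ 2 := by
  set D := Matrix.diagonal S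
  have hdiff : R - A * Bᵀ = A * (D - 1) * Bᵀ := by
    rw [hpolar, Matrix.mul_sub, Matrix.sub_mul, Matrix.mul_one]
  have hgram : 1 - Rᵀ * R = B * (1 - D * D) * Bᵀ := by
    rw [Matrix.mul_sub, Matrix.sub_mul, Matrix.mul_one, mul_eq_one_comm.mp hB, hpolar]
    simp only [transpose_mul, transpose_transpose, D, diagonal_transpose, Matrix.mul_assoc]
    rw [← Matrix.mul_assoc Aᵀ A, hA, Matrix.one_mul]
  calc ‖R - A * Bᵀ‖ = ‖D - 1‖ := by
        rw [hdiff, l2_opNorm_mul_mul_transpose_of_orthogonal hA hB]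
    _ ≤ ‖1 - D * D‖ := l2_opNorm_diagonal_sub_one_le hS
    _ = ‖1 - Rᵀ * R‖ := by rw [hgram, l2_opNorm_mul_mul_transpose_of_orthogonal hB hB]
    _ ≤ ‖U * Uᵀ - V * Vᵀ‖ ^ 2 := hR ▸ l2_opNorm_one_sub_transpose_mul_self_le hU hV
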